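/- For n ≥ 2 and 0 < τ ≤ 1/4 define A_n(τ) := [ (−1)^{n+1}·nπ/(4·q₁(τ)^{n+1}) − (1/2)(1/2 + 2πi/τ^2)·i^n/(1 − i·q₁(τ))^n ] / ( π·(iτ^2)^{n−1} ), which equals φ⁽ⁿ⁾(q₁(τ),τ)/(π (iτ^2)^{n−1} (n−1)!) where φ⁽ⁿ⁾ is the n-th derivative of φ(·,τ). Then for every ε > 0 there exists τ₀ ∈ (0,1/4] such that for all τ ∈ (0,τ₀) and all integers n ≥ 2 one has |A_n(τ)| ≤ (1+ε)^n. -/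

import Mathlib

/-!
With `t = τ²`, the saddle `q₁(τ)` lies within `t/2` of `i/t + 1/(4π) - i`, so `Im q₁ ≥ 1/t - 1 - t/2`.
Both `t‖q₁‖` and `t‖1 - i q₁‖ ≥ t Re (1 - i q₁) = t (1 + Im q₁)` are therefore at least `1 - 2t`.
Inserting this into the triangle inequality for the two terms of `A_n` gives
`‖A_n‖ ≤ n t² / (4 (1 - 2t)^(n+1)) + (1 + t) / (1 - 2t)^n`, and Bernoulli's inequality
`1 + n t ≤ (1 + t)^n` bounds this by `((1 + t) / (1 - 2t))^n`, whose base tends to `1` as `τ → 0`.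
-/

open Real Complex

noncomputable def Ppoly (τ : ℝ) (z : ℂ) : ℂ :=
  z ^ 3 + (Complex.I - 1 / (4 * (π : ℂ)) - Complex.I / (τ : ℂ) ^ 2) * z ^ 2
    - z / 4 - Complex.I / 4

/-- The normalized Taylor coefficients `A_n(τ)` of `φ` at the saddle `q₁`. -/
noncomputable def A1 (q₁ : ℝ → ℂ) (n : ℕ) (τ : ℝ) : ℂ :=
  ((-1 : ℂ) ^ (n + 1) * (n : ℂ) * (π : ℂ) / (4 * q₁ τ ^ (n + 1)) -
      (1 / 2 : ℂ) * (1 / 2 + 2 * (π : ℂ) * Complex.I / (τ : ℂ) ^ 2) *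
        Complex.I ^ n / (1 - Complex.I * q₁ τ) ^ n) /
    ((π : ℂ) * (Complex.I * (τ : ℂ) ^ 2) ^ (n - 1))

lemma im_ge_of_norm_sub_le {q : ℂ} {τ : ℝ}
    (h : ‖q - (I / (τ : ℂ) ^ 2 + 1 / (4 * (π : ℂ)) - I)‖ ≤ τ ^ 2 / 2) :
    1 / τ ^ 2 - 1 - τ ^ 2 / 2 ≤ q.im := by
  have him : (I / (τ : ℂ) ^ 2 + 1 / (4 * (π : ℂ)) - I).im = 1 / τ ^ 2 - 1 := by
    rw [← ofReal_pow, sub_im, add_im, div_ofReal_im]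
    simp
  have := (abs_le.1 ((abs_im_le_norm _).trans h)).1
  rw [sub_im, him] at this
  linarith

lemma one_sub_two_mul_le_mul_norm {q : ℂ} {t : ℝ} (ht : 0 < t) (ht2 : t ≤ 2)
    (h : 1 / t - 1 - t / 2 ≤ q.im) :
    1 - 2 * t ≤ t * ‖q‖ ∧ 1 - 2 * t ≤ t * ‖1 - I * q‖ := by
  have hre : (1 - I * q).re = 1 + q.im := by simp
  have key : 1 - t - t ^ 2 / 2 ≤ t * q.im :=
    calc 1 - t - t ^ 2 / 2 = t * (1 / t - 1 - t / 2) := by field_simp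
      _ ≤ t * q.im := mul_le_mul_of_nonneg_left h ht.le
  constructor
  · nlinarith [im_le_norm q]
  · nlinarith [re_le_norm (1 - I * q)]

lemma norm_A1_le (q₁ : ℝ → ℂ) {n : ℕ} {τ : ℝ} (hn : 1 ≤ n) (hτ : τ ≠ 0) :
    ‖A1 q₁ n τ‖ ≤ n * (τ ^ 2) ^ 2 / (4 * (τ ^ 2 * ‖q₁ τ‖) ^ (n + 1)) +
      (1 + τ ^ 2 / (4 * π)) / (τ ^ 2 * ‖1 - I * q₁ τ‖) ^ n := by
  have hcoef : ‖1 / 2 + 2 * (π : ℂ) * I / (τ : ℂ) ^ 2‖ ≤ 1 / 2 + 2 * π / τ ^ 2 := by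
    refine (norm_add_le _ _).trans_eq ?_
    simp [abs_of_pos pi_pos]
  have hden : ‖(π : ℂ) * (I * (τ : ℂ) ^ 2) ^ (n - 1)‖ = π * (τ ^ 2) ^ (n - 1) := by
    simp [abs_of_pos pi_pos]
  calc ‖A1 q₁ n τ‖
      ≤ (n * π / (4 * ‖q₁ τ‖ ^ (n + 1)) +
          1 / 2 * (1 / 2 + 2 * π / τ ^ 2) / ‖1 - I * q₁ τ‖ ^ n) / (π * (τ ^ 2) ^ (n - 1)) := by
        rw [A1, norm_div, hden]
        refine div_le_div_of_nonneg_right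
          ((norm_sub_le (E := ℂ) _ _).trans (add_le_add ?_ ?_)) (by positivity)
        · simp [abs_of_pos pi_pos]
        · simp only [norm_div, norm_mul, norm_pow, norm_I, norm_one, Complex.norm_ofNat, one_pow,
            mul_one]
          gcongr
    _ = _ := by
        obtain ⟨m, rfl⟩ : ∃ m, n = m + 1 := ⟨n - 1, by omega⟩
        have ht : τ ^ 2 ≠ 0 := pow_ne_zero 2 hτ
        generalize τ ^ 2 = t at ht ⊢
        rw [mul_pow, mul_pow]
        field_simp
        push_cast
        ring

lemma add_le_one_add_div_one_sub_two_mul_pow {t : ℝ} {n : ℕ} (ht : 0 ≤ t) (ht4 : t ≤ 1 / 4)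
    (hn : 2 ≤ n) :
    n * t ^ 2 / (4 * (1 - 2 * t) ^ (n + 1)) + (1 + t) / (1 - 2 * t) ^ n ≤
      ((1 + t) / (1 - 2 * t)) ^ n := by
  have hs : 1 / 2 ≤ 1 - 2 * t := by linarith
  have hn' : (2 : ℝ) ≤ n := by exact_mod_cast hn
  have hsq : n * t ^ 2 / (4 * (1 - 2 * t)) ≤ (n - 1) * t := by
    rw [div_le_iff₀ (by positivity)]
    nlinarith [mul_nonneg ht (sub_nonneg.2 ht4), mul_nonneg (mul_nonneg ht ht) (sub_nonneg.2 hn')]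
  calc n * t ^ 2 / (4 * (1 - 2 * t) ^ (n + 1)) + (1 + t) / (1 - 2 * t) ^ n
      = (n * t ^ 2 / (4 * (1 - 2 * t)) + (1 + t)) / (1 - 2 * t) ^ n := by
        generalize 1 - 2 * t = s; rw [pow_succ]; ring
    _ ≤ (1 + n * t) / (1 - 2 * t) ^ n := by gcongr ?_ / _; linarith
    _ ≤ ((1 + t) / (1 - 2 * t)) ^ n := by
        rw [div_pow]; gcongr; exact one_add_mul_le_pow (by linarith) n

theorem statement14 (q₁ : ℝ → ℂ)
    (hq₁ : ∀ τ : ℝ, 0 < τ → τ ≤ 1 / 4 →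
      ‖q₁ τ - (Complex.I / (τ : ℂ) ^ 2 + 1 / (4 * (π : ℂ)) - Complex.I)‖
          ≤ τ ^ 2 / 2 ∧ Ppoly τ (q₁ τ) = 0)
    (ε : ℝ) (hε : 0 < ε) :
    ∃ τ₀ : ℝ, 0 < τ₀ ∧ τ₀ ≤ 1 / 4 ∧
      ∀ τ : ℝ, 0 < τ → τ < τ₀ → ∀ n : ℕ, 2 ≤ n →
        ‖A1 q₁ n τ‖ ≤ (1 + ε) ^ n := by
  obtain ⟨δ, hδ, hbase⟩ :
      ∃ δ > 0, ∀ τ : ℝ, dist τ 0 < δ → (1 + τ ^ 2) / (1 - 2 * τ ^ 2) < 1 + ε := by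
    refine Metric.eventually_nhds_iff.1 (Filter.Tendsto.eventually_lt_const (v := 1) (by linarith) ?_)
    have hcont : ContinuousAt (fun τ : ℝ => (1 + τ ^ 2) / (1 - 2 * τ ^ 2)) 0 :=
      (by fun_prop : Continuous fun τ : ℝ => 1 + τ ^ 2).continuousAt.div
        (by fun_prop : Continuous fun τ : ℝ => 1 - 2 * τ ^ 2).continuousAt (by norm_num)
    simpa using hcont.tendsto
  refine ⟨min δ (1 / 4), lt_min hδ (by norm_num), min_le_right _ _, fun τ hτ hτ₀ n hn => ?_⟩
  have hτ4 : τ ≤ 1 / 4 := (hτ₀.trans_le (min_le_right _ _)).le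
  have ht4 : τ ^ 2 ≤ 1 / 4 := by nlinarith
  obtain ⟨hq, hq'⟩ := one_sub_two_mul_le_mul_norm (by positivity) (by linarith)
    (im_ge_of_norm_sub_le (hq₁ τ hτ hτ4).1)
  have hs : 0 < 1 - 2 * τ ^ 2 := by linarith
  calc ‖A1 q₁ n τ‖
      ≤ n * (τ ^ 2) ^ 2 / (4 * (τ ^ 2 * ‖q₁ τ‖) ^ (n + 1)) +
          (1 + τ ^ 2 / (4 * π)) / (τ ^ 2 * ‖1 - I * q₁ τ‖) ^ n :=
        norm_A1_le q₁ (by omega) hτ.ne'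
    _ ≤ n * (τ ^ 2) ^ 2 / (4 * (1 - 2 * τ ^ 2) ^ (n + 1)) + (1 + τ ^ 2) / (1 - 2 * τ ^ 2) ^ n := by
        have : τ ^ 2 / (4 * π) ≤ τ ^ 2 := div_le_self (by positivity) (by linarith [pi_gt_three])
        gcongr
    _ ≤ ((1 + τ ^ 2) / (1 - 2 * τ ^ 2)) ^ n :=
        add_le_one_add_div_one_sub_two_mul_pow (by positivity) ht4 hn
    _ ≤ (1 + ε) ^ n := by
        gcongr
        exact (hbase τ (by simpa [abs_of_pos hτ] using hτ₀.trans_le (min_le_left _ _))).le
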